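/- arXiv:1705.07668 — 5 statements merged into one kernel-verified Lean document; each statement's English description precedes it below -/
import Mathlib

section
/- If a q-linearized polynomial f of q-degree k over F_{q^n} has kernel of F_q-dimension exactly k in F_{q^n}, then there exists a nonzero z ∈ F_{q^n} with f_0 z = (-1)^k f_k^q z^q. -/
/-!
The kernel `V` has `q ^ k` elements, all of them roots of `f`, so
`f = f_k ∏_{v ∈ V} (X - v)` and comparing coefficients of `X` gives `f_0 = f_k ∏_{v ≠ 0} (-v)`.
Split `V ∖ {0}` into the lines `F^× v`: since `∏_{c ∈ F^×} (-c) = -1`, each line contributes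
`-v ^ (q - 1)`, and there are `1 + q + ⋯ + q ^ (k - 1)` lines. As `(-1) ^ (q ^ i) = -1` in `F`,
this gives `f_0 = (-1) ^ k f_k w ^ (q - 1)` with `w` the product of one representative per line,
and `z = w / f_k` is the required element.
-/

open Polynomial Finset
open scoped LinearAlgebra.Projectivization

namespace Projectivization

variable {K V : Type*} [Field K] [AddCommGroup V] [Module K V]

theorem bijective_smul_rep :
    Function.Bijective fun x : ℙ K V × Kˣ ↦
      (⟨x.2 • x.1.rep, (smul_eq_zero_iff_eq x.2).not.2 x.1.rep_nonzero⟩ :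
        {v : V // v ≠ 0}) := by
  refine ⟨fun ⟨p, a⟩ ⟨p', a'⟩ h ↦ ?_, fun ⟨v, hv⟩ ↦ ?_⟩
  · have h : a • p.rep = a' • p'.rep := congrArg Subtype.val h
    have hp : p = p' := by
      rw [← p.mk_rep, ← p'.mk_rep, mk_eq_mk_iff]
      exact ⟨a⁻¹ * a', by rw [mul_smul, ← h, inv_smul_smul]⟩
    subst hp
    refine Prod.ext rfl (Units.ext (smul_left_injective K p.rep_nonzero ?_))
    simpa only [Units.smul_def] using h
  · obtain ⟨a, ha⟩ := exists_smul_eq_mk_rep K v hv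
    exact ⟨(mk K v hv, a⁻¹), Subtype.ext (by simp [← ha])⟩

variable (K) in
theorem prod_erase_zero_eq_prod_units_smul_rep [Fintype K] [DecidableEq K] [Fintype V]
    [DecidableEq V] [Fintype (ℙ K V)] {M : Type*} [CommMonoid M] (g : V → M) :
    ∏ v ∈ univ.erase 0, g v = ∏ p : ℙ K V, ∏ a : Kˣ, g (a • p.rep) := by
  rw [← Fintype.prod_prod_type', Fintype.prod_bijective _ bijective_smul_rep
    (fun x ↦ g (x.2 • x.1.rep)) (g ∘ Subtype.val) fun _ ↦ rfl]
  exact Finset.prod_subtype _ (by simp) g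

end Projectivization

section FiniteScalars

variable {F L : Type*} [Field F] [Fintype F] [CommRing L] [Algebra F L]

theorem prod_units_neg_smul [DecidableEq F] (x : L) :
    ∏ a : Fˣ, -((a : F) • x) = -x ^ (Fintype.card F - 1) := by
  have hunits : ∏ a : Fˣ, -(a : F) = -1 := by
    rw [Fintype.prod_equiv (Equiv.neg Fˣ) _ (fun a ↦ (a : F)) fun a ↦ (Units.val_neg a).symm]
    simpa using congrArg Units.val (FiniteField.prod_univ_units_id_eq_neg_one (K := F))
  simp_rw [← neg_smul, Algebra.smul_def]
  rw [prod_mul_distrib, ← map_prod, hunits, prod_const, card_univ, Fintype.card_units]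
  simp

theorem neg_one_pow_geom_sum_card (k : ℕ) :
    (-1 : L) ^ ∑ i ∈ range k, Fintype.card F ^ i = (-1) ^ k := by
  have hfrob (i : ℕ) : (-1 : L) ^ Fintype.card F ^ i = -1 := by
    rw [← map_one (algebraMap F L), ← map_neg, ← map_pow, FiniteField.pow_card_pow]
  rw [← prod_pow_eq_pow_sum, prod_congr rfl fun i _ ↦ hfrob i, prod_const, card_range]

end FiniteScalars

theorem Submodule.exists_prod_erase_zero_neg_eq {F L : Type*} [Field F] [Fintype F]
    [DecidableEq F] [Field L] [Algebra F L] (V : Submodule F L) [Fintype V] [DecidableEq V] :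
    ∃ w : L, w ≠ 0 ∧
      ∏ v ∈ univ.erase (0 : V), -(v : L) =
        (-1) ^ Module.finrank F V * w ^ (Fintype.card F - 1) := by
  have : Fintype (ℙ F V) := Fintype.ofFinite _
  refine ⟨∏ p : ℙ F V, (p.rep : L),
    prod_ne_zero_iff.2 fun p _ ↦ by simpa using p.rep_nonzero, ?_⟩
  rw [Projectivization.prod_erase_zero_eq_prod_units_smul_rep F (fun v : V ↦ -(v : L))]
  simp only [Submodule.coe_smul_of_tower, Units.smul_def, prod_units_neg_smul]
  rw [prod_neg, prod_pow, card_univ, ← Nat.card_eq_fintype_card,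
    Projectivization.card_of_finrank F V rfl, Nat.card_eq_fintype_card, neg_one_pow_geom_sum_card]

section Linearized

variable {R : Type*} [Semiring R] {k : ℕ}

noncomputable def linearizedPoly (q : ℕ) (f : Fin (k + 1) → R) : R[X] :=
  ∑ i, C (f i) * X ^ q ^ (i : ℕ)

variable {q : ℕ} (f : Fin (k + 1) → R)

theorem eval_linearizedPoly (a : R) :
    (linearizedPoly q f).eval a = ∑ i, f i * a ^ q ^ (i : ℕ) := by
  simp [linearizedPoly, eval_finsetSum]

theorem coeff_linearizedPoly_pow (hq : 1 < q) (i : Fin (k + 1)) :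
    (linearizedPoly q f).coeff (q ^ (i : ℕ)) = f i := by
  rw [linearizedPoly, finsetSum_coeff, Fintype.sum_eq_single i fun j hj ↦ ?_]
  · simp
  · rw [coeff_C_mul_X_pow, if_neg]
    exact fun h ↦ hj (Fin.val_injective (Nat.pow_right_injective hq h).symm)

theorem natDegree_linearizedPoly (hq : 1 < q) (hfk : f (Fin.last k) ≠ 0) :
    (linearizedPoly q f).natDegree = q ^ k := by
  refine le_antisymm (natDegree_sum_le_of_forall_le _ _ fun i _ ↦ ?_) ?_
  · exact (natDegree_C_mul_X_pow_le _ _).trans (Nat.pow_le_pow_right (by omega) (by omega))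
  · have htop := coeff_linearizedPoly_pow f hq (Fin.last k)
    rw [Fin.val_last] at htop
    exact le_natDegree_of_ne_zero (htop ▸ hfk)

end Linearized

theorem coeff_one_prod_X_sub_C {R : Type*} [CommRing R] [DecidableEq R] {s : Finset R}
    (h0 : 0 ∈ s) : (∏ a ∈ s, (X - C a)).coeff 1 = ∏ a ∈ s.erase 0, -a := by
  rw [← mul_prod_erase s _ h0, C_0, sub_zero, ← zero_add 1, coeff_X_mul,
    coeff_zero_eq_eval_zero, eval_prod]
  simp

theorem linearized_coeff_zero_eq_mul_prod_neg_roots {L : Type*} [Field L] [DecidableEq L]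
    {q k : ℕ} (hq : 1 < q) (f : Fin (k + 1) → L) (hfk : f (Fin.last k) ≠ 0) (s : Finset L)
    (hs : ∀ a ∈ s, ∑ i, f i * a ^ q ^ (i : ℕ) = 0) (hcard : s.card = q ^ k) :
    f 0 = f (Fin.last k) * ∏ a ∈ s.erase 0, -a := by
  set P := linearizedPoly q f
  have hdeg := natDegree_linearizedPoly f hq hfk
  have hP : P ≠ 0 := ne_zero_of_natDegree_gt (n := 0) (hdeg ▸ pow_pos (by omega) k)
  have hroots : P.roots = s.val :=
    roots_eq_of_natDegree_le_card_of_ne_zero (fun a ha ↦ by rw [eval_linearizedPoly, hs a ha])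
      (hdeg.trans hcard.symm).le hP
  have h0 : (0 : L) ∈ s := by
    rw [← Finset.mem_val, ← hroots, mem_roots hP, IsRoot, eval_linearizedPoly]
    exact sum_eq_zero fun i _ ↦ by rw [zero_pow (pow_pos (by omega) _).ne', mul_zero]
  have hsplit : C (f (Fin.last k)) * ∏ a ∈ s, (X - C a) = P := by
    have := C_leadingCoeff_mul_prod_multiset_X_sub_C (p := P) (by rw [hroots, hdeg]; exact hcard)
    rwa [hroots, leadingCoeff, hdeg, ← Fin.val_last k, coeff_linearizedPoly_pow f hq] at this
  have hcoeff := congrArg (coeff · 1) hsplit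
  simp only [coeff_C_mul, coeff_one_prod_X_sub_C h0] at hcoeff
  simpa [hcoeff] using (coeff_linearizedPoly_pow f hq 0).symm

theorem stmt_4_general (q : ℕ)
    (F L : Type) [Field F] [Fintype F] [Field L] [Fintype L] [Algebra F L]
    (hF : Fintype.card F = q)
    (k : ℕ) (f : Fin (k + 1) → L) (hfk : f (Fin.last k) ≠ 0)
    (V : Submodule F L)
    (hV : (V : Set L) = {a : L | ∑ i : Fin (k + 1), f i * a ^ q ^ (i : ℕ) = 0})
    (hdim : Module.finrank F V = k) :
    ∃ z : L, z ≠ 0 ∧ f 0 * z = (-1) ^ k * (f (Fin.last k)) ^ q * z ^ q := by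
  classical
  subst hF
  have hq : 1 < Fintype.card F := Fintype.one_lt_card
  let ι : V ↪ L := Function.Embedding.subtype (· ∈ V)
  have hcard : (univ.map ι).card = Fintype.card F ^ k := by
    rw [card_map, card_univ, Module.card_eq_pow_finrank (K := F) (V := V), hdim]
  have hroots : ∀ a ∈ univ.map ι, ∑ i, f i * a ^ Fintype.card F ^ (i : ℕ) = 0 := by
    intro a ha
    obtain ⟨v, -, rfl⟩ := mem_map.1 ha
    exact hV.subset v.2
  obtain ⟨w, hw, hprod⟩ := V.exists_prod_erase_zero_neg_eq
  have hf0 : f 0 = f (Fin.last k) * ((-1) ^ k * w ^ (Fintype.card F - 1)) := by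
    have herase : (univ.map ι).erase 0 = (univ.erase 0).map ι := by rw [map_erase]; rfl
    rw [linearized_coeff_zero_eq_mul_prod_neg_roots hq f hfk _ hroots hcard, herase, prod_map]
    simp only [ι, Function.Embedding.coe_subtype]
    rw [hprod, hdim]
  refine ⟨w / f (Fin.last k), div_ne_zero hw hfk, ?_⟩
  rw [hf0, div_pow]
  field_simp
  exact pow_sub_one_mul (by omega) w

/-- If a q-linearized polynomial f of q-degree k over F_{q^n} has
kernel of F_q-dimension exactly k in F_{q^n}, then there exists a nonzero
z ∈ F_{q^n} with f_0 z = (-1)^k f_k^q z^q. -/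
theorem stmt_4 (q n : ℕ) (hq : IsPrimePow q) (hn : 0 < n)
    (F L : Type) [Field F] [Fintype F] [Field L] [Fintype L] [Algebra F L]
    (hF : Fintype.card F = q) (hL : Fintype.card L = q ^ n)
    (k : ℕ) (f : Fin (k + 1) → L) (hfk : f (Fin.last k) ≠ 0)
    (V : Submodule F L)
    (hV : (V : Set L) = {a : L | ∑ i : Fin (k + 1), f i * a ^ q ^ (i : ℕ) = 0})
    (hdim : Module.finrank F V = k) :
    ∃ z : L, z ≠ 0 ∧ f 0 * z = (-1) ^ k * (f (Fin.last k)) ^ q * z ^ q :=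
  stmt_4_general q F L hF k f hfk V hV hdim
end

section
/- Singleton-type bound for rank metric codes: if C ⊆ F_{q^n}^n is a rank metric code with |C| = M and minimum rank distance d, then M ≤ q^{n(n-d+1)}. -/
/-- The rank distance on F_{q^n}^n: the F_q-dimension of the span of the
coordinates of x - y. -/
noncomputable def rankDist (F : Type) [Field F] {L : Type} [Field L] [Algebra F L]
    {n : ℕ} (x y : Fin n → L) : ℕ :=
  Module.finrank F (Submodule.span F (Set.range fun i => x i - y i))

/-- Singleton-type bound for rank metric codes: if C ⊆ F_{q^n}^n is
a rank metric code with |C| = M ≥ 2 and minimum rank distance d, then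
M ≤ q^{n(n-d+1)}. -/
theorem stmt_6 (q n : ℕ) (hq : IsPrimePow q) (hn : 0 < n)
    (F L : Type) [Field F] [Fintype F] [Field L] [Fintype L] [Algebra F L]
    (hF : Fintype.card F = q) (hL : Fintype.card L = q ^ n)
    (C : Finset (Fin n → L)) (hM : 2 ≤ C.card) (d : ℕ)
    (hd_le : ∀ x ∈ C, ∀ y ∈ C, x ≠ y → d ≤ rankDist F x y)
    (hd_ex : ∃ x ∈ C, ∃ y ∈ C, x ≠ y ∧ rankDist F x y = d) :
    C.card ≤ q ^ (n * (n - d + 1)) := by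
  classical
  have hFL : FiniteDimensional F L := Module.Finite.of_finite
  -- d ≥ 1
  have hd1 : 1 ≤ d := by
    by_contra h
    push_neg at h
    interval_cases d
    obtain ⟨x, hx, y, hy, hxy, hrd⟩ := hd_ex
    unfold rankDist at hrd
    rw [Submodule.finrank_eq_zero] at hrd
    apply hxy
    funext i
    have : x i - y i ∈ Submodule.span F (Set.range fun i => x i - y i) :=
      Submodule.subset_span ⟨i, rfl⟩
    rw [hrd, Submodule.mem_bot] at this
    exact sub_eq_zero.mp this
  set k := n - d + 1 with hk_def
  have hk : k ≤ n := by omega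
  -- injectivity of projection onto first k coordinates
  have hinj : Set.InjOn (fun c : Fin n → L => fun i : Fin k => c (Fin.castLE hk i)) C := by
    intro x hx y hy hxy
    by_contra hne
    have hle := hd_le x hx y hy hne
    -- all differences with index < k vanish
    have key : ∀ i : Fin n, (i : ℕ) < k → x i - y i = 0 := by
      intro i hi
      have := congrFun hxy ⟨i, hi⟩
      simp only [Fin.castLE_mk] at this
      simpa [sub_eq_zero] using this
    set T : Finset L := (Finset.univ.filter (fun i : Fin n => k ≤ (i : ℕ))).image
      (fun i => x i - y i) with hT
    have hsub : (Set.range fun i => x i - y i) ⊆ insert (0 : L) (T : Set L) := by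
      rintro _ ⟨i, rfl⟩
      by_cases hi : (i : ℕ) < k
      · exact Or.inl (key i hi)
      · exact Or.inr (by simp [hT]; exact ⟨i, by omega, rfl⟩)
    have hspan : Submodule.span F (Set.range fun i => x i - y i) ≤
        Submodule.span F (T : Set L) := by
      have := Submodule.span_mono (R := F) hsub
      rwa [Submodule.span_insert_zero] at this
    have h1 : rankDist F x y ≤ T.card := by
      unfold rankDist
      exact le_trans (Submodule.finrank_mono hspan) (finrank_span_finset_le_card T)
    have h2 : T.card ≤ d - 1 := by
      rw [hT]
      refine le_trans Finset.card_image_le ?_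
      have hcard : (Finset.univ.filter fun i : Fin n => k ≤ (i : ℕ)).card = n - k := by
        rw [← Nat.card_Ico k n]
        refine Finset.card_bij (fun i _ => (i : ℕ)) ?_ ?_ ?_
        · intro a ha
          simp only [Finset.mem_filter, Finset.mem_univ, true_and] at ha
          simp [Finset.mem_Ico, ha, a.isLt]
        · intro a _ b _ h
          exact Fin.val_injective h
        · intro b hb
          simp only [Finset.mem_Ico] at hb
          exact ⟨⟨b, hb.2⟩, by simp [hb.1], rfl⟩
      rw [hcard]
      omega
    omega
  calc C.card ≤ Fintype.card (Fin k → L) := by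
        have := Finset.card_le_card_of_injOn _ (fun a _ => Finset.mem_univ _) hinj
        simpa using this
    _ = (q ^ n) ^ k := by simp [hL]
    _ = q ^ (n * k) := by rw [← pow_mul]
end

section
/- Under the condition N(η) ≠ (-1)^{nk}, every nonzero element of G(η,r), viewed as an F_q-linear endomorphism of F_{q^n}, has rank at least n-k+1; hence the twisted Gabidulin code G(η,r) is an MRD code of size q^{nk}. -/
/-!
The element of `G(η, r)` with coefficients `c` is the `q`-linearized polynomial
`f = ∑_{i<k} c_i x^{q^i} + η c_0^{q^r} x^{q^k}`. The kernel of a nonzero linearized polynomial of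
`q`-degree `k` has dimension at most `k`, because it lies in the root set of a polynomial of
degree `q^k`. When the dimension is exactly `k`, the coefficients satisfy
`N(b_0) = N((-1)^k b_k)` (Gow–Quinlan): for a nonzero root `u`, right division by
`x^q - u^{q-1} x` leaves the remainder `(b_0 + h_0 u^{q-1}) x`, which vanishes at `u`, and the
quotient has `q`-degree `k - 1`, the same top coefficient and a kernel of dimension `k - 1`;
moreover `N(u^{q-1}) = N(u)^{q-1} = 1`. For `f` this reads `N(c_0) = (-1)^{nk} N(η) N(c_0)`, which
`N(η) ≠ (-1)^{nk}` rules out, so `rank f ≥ n - k + 1`. In particular `c ↦ f` is injective,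
which gives `q^{nk}` codewords.
-/

open Finset Module FiniteField

theorem exists_eq_sub_mul_succ {R : Type*} [Ring R] (a c : ℕ → R) (N : ℕ) :
    ∃ h : ℕ → R, h N = 0 ∧ ∀ j < N, a j = h j - h (j + 1) * c (j + 1) := by
  induction N generalizing a c with
  | zero => exact ⟨0, rfl, fun j hj => absurd hj j.not_lt_zero⟩
  | succ N ih =>
    obtain ⟨h, hN, hrec⟩ := ih (fun j => a (j + 1)) (fun j => c (j + 1))
    refine ⟨fun j => Nat.casesOn j (a 0 + h 0 * c 1) h, hN, fun j hj => ?_⟩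
    cases j with
    | zero => simp
    | succ j => exact hrec j (by omega)

theorem finrank_le_finrank_add_finrank_ker_of_mapsTo {K V W : Type*} [DivisionRing K]
    [AddCommGroup V] [Module K V] [AddCommGroup W] [Module K W]
    [FiniteDimensional K V] [FiniteDimensional K W]
    (g : V →ₗ[K] W) {A : Submodule K V} {B : Submodule K W} (hAB : ∀ x ∈ A, g x ∈ B) :
    finrank K A ≤ finrank K B + finrank K (LinearMap.ker g) := by
  let φ : A →ₗ[K] B := (g.domRestrict A).codRestrict B fun x => hAB x x.2
  let ι : LinearMap.ker φ →ₗ[K] LinearMap.ker g :=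
    (A.subtype ∘ₗ (LinearMap.ker φ).subtype).codRestrict _ fun x =>
      congrArg Subtype.val (LinearMap.mem_ker.mp x.2)
  have hι : Function.Injective ι := fun x y hxy =>
    Subtype.ext (Subtype.ext congr(($hxy : V)))
  rw [← LinearMap.finrank_range_add_finrank_ker φ]
  exact add_le_add (Submodule.finrank_le _) (LinearMap.finrank_le_finrank_of_injective hι)

section Linearized

variable {F L : Type*} [Field F] [Fintype F] [Field L] [Algebra F L]

variable (F) in
theorem frobeniusAlgHom_pow_apply (i : ℕ) (x : L) :
    (frobeniusAlgHom F L ^ i) x = x ^ Fintype.card F ^ i := by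
  rw [AlgHom.coe_pow, coe_frobeniusAlgHom, pow_iterate]

variable (F) in
theorem sub_pow_card_pow (i : ℕ) (x y : L) :
    (x - y) ^ Fintype.card F ^ i = x ^ Fintype.card F ^ i - y ^ Fintype.card F ^ i := by
  simp only [← frobeniusAlgHom_pow_apply F, map_sub]

variable (F) in
noncomputable def linearizedMap (b : ℕ → L) (k : ℕ) : L →ₗ[F] L :=
  ∑ i ∈ range (k + 1), b i • (frobeniusAlgHom F L ^ i).toLinearMap

theorem linearizedMap_apply (b : ℕ → L) (k : ℕ) (x : L) :
    linearizedMap F b k x = ∑ i ∈ range (k + 1), b i * x ^ Fintype.card F ^ i := by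
  simp only [linearizedMap, LinearMap.coe_sum, Finset.sum_apply, LinearMap.smul_apply,
    AlgHom.toLinearMap_apply, frobeniusAlgHom_pow_apply, smul_eq_mul]

theorem linearizedMap_sub (b b' : ℕ → L) (k : ℕ) :
    linearizedMap F (b - b') k = linearizedMap F b k - linearizedMap F b' k := by
  ext x
  simp only [linearizedMap_apply, LinearMap.sub_apply, Pi.sub_apply, sub_mul, sum_sub_distrib]

theorem linearizedMap_succ_of_eq_zero {b : ℕ → L} {k : ℕ} (hb : b (k + 1) = 0) :
    linearizedMap F b (k + 1) = linearizedMap F b k := by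
  rw [linearizedMap, sum_range_succ, hb, zero_smul, add_zero, linearizedMap]

theorem finrank_ker_linearizedMap_le [Finite L] {b : ℕ → L} {k : ℕ} (hb : ∃ i ≤ k, b i ≠ 0) :
    finrank F (LinearMap.ker (linearizedMap F b k)) ≤ k := by
  classical
  have := Fintype.ofFinite L
  set q := Fintype.card F
  obtain ⟨i, hik, hbi⟩ := hb
  set P : Polynomial L := ∑ j ∈ range (k + 1), Polynomial.C (b j) * Polynomial.X ^ q ^ j
  have hq : 1 < q := Fintype.one_lt_card
  have hP : P ≠ 0 := by
    refine fun h => hbi ?_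
    have := congrArg (Polynomial.coeff · (q ^ i)) h
    simp only [P, Polynomial.finsetSum_coeff, Polynomial.coeff_C_mul_X_pow,
      (Nat.pow_right_injective hq).eq_iff, Polynomial.coeff_zero] at this
    rwa [sum_ite_eq, if_pos (mem_range.mpr (Nat.lt_succ_of_le hik))] at this
  have hdeg : P.natDegree ≤ q ^ k := by
    refine Polynomial.natDegree_sum_le_of_forall_le _ _ fun j hj => ?_
    refine (Polynomial.natDegree_C_mul_le _ _).trans ((Polynomial.natDegree_X_pow_le _).trans ?_)
    exact Nat.pow_le_pow_right hq.le (Nat.lt_succ_iff.mp (mem_range.mp hj))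
  have hroots : (LinearMap.ker (linearizedMap F b k) : Set L).toFinset.val ⊆ P.roots := by
    intro x hx
    simp only [Set.mem_toFinset, SetLike.mem_coe, LinearMap.mem_ker, Finset.mem_val] at hx
    rw [Polynomial.mem_roots hP, Polynomial.IsRoot, ← hx, linearizedMap_apply]
    simp [P, q, Polynomial.eval_finsetSum]
  have hcard := (Polynomial.card_le_degree_of_subset_roots hroots).trans hdeg
  rw [← Nat.card_eq_card_toFinset, SetLike.coe_sort_coe, Nat.card_eq_fintype_card,
    card_eq_pow_finrank (K := F)] at hcard
  exact (Nat.pow_le_pow_iff_right hq).mp hcard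

theorem exists_linearizedMap_succ_eq (b : ℕ → L) (k : ℕ) (α : L) :
    ∃ h : ℕ → L, h k = b (k + 1) ∧ ∀ x, linearizedMap F b (k + 1) x =
      linearizedMap F h k (x ^ Fintype.card F - α * x) + (b 0 + h 0 * α) * x := by
  set q := Fintype.card F
  obtain ⟨h, hlast, hrec⟩ :=
    exists_eq_sub_mul_succ (fun j => b (j + 1)) (fun j => α ^ q ^ j) (k + 1)
  refine ⟨h, by simpa [hlast] using (hrec k k.lt_succ_self).symm, fun x => ?_⟩
  have hterm : ∀ j ∈ range (k + 1), b (j + 1) * x ^ q ^ (j + 1) - h j * (x ^ q - α * x) ^ q ^ j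
      = h j * (α * x) ^ q ^ j - h (j + 1) * (α * x) ^ q ^ (j + 1) := fun j hj => by
    rw [hrec j (mem_range.mp hj), sub_pow_card_pow, mul_pow, mul_pow, ← pow_mul, ← pow_succ']
    ring
  have htelescope := sum_range_sub' (fun j => h j * (α * x) ^ q ^ j) (k + 1)
  rw [← sum_congr rfl hterm, sum_sub_distrib] at htelescope
  rw [linearizedMap_apply, linearizedMap_apply, sum_range_succ' _ (k + 1)]
  simp only [hlast, zero_mul, sub_zero, pow_zero, pow_one] at htelescope ⊢
  linear_combination htelescope

theorem norm_coeff_zero_eq_of_le_finrank_ker [Finite L] {k : ℕ} {b : ℕ → L}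
    (hker : k ≤ finrank F (LinearMap.ker (linearizedMap F b k))) :
    Algebra.norm F (b 0) = Algebra.norm F ((-1) ^ k * b k) := by
  induction k generalizing b with
  | zero => simp
  | succ k ih =>
    set q := Fintype.card F
    have hq : 1 ≤ q := Fintype.card_pos
    obtain ⟨u, hu, hu0⟩ := Submodule.exists_mem_ne_zero_of_ne_bot
      (Submodule.one_le_finrank_iff.mp (k.succ_pos.trans_le hker))
    set α := u ^ (q - 1)
    obtain ⟨h, htop, hdecomp⟩ := exists_linearizedMap_succ_eq (F := F) b k α
    have hαu : α * u = u ^ q := by rw [← pow_succ, Nat.sub_add_cancel hq]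
    have hb0 : b 0 + h 0 * α = 0 := by
      have := hdecomp u
      rw [LinearMap.mem_ker.mp hu, hαu, sub_self, map_zero, zero_add] at this
      exact (mul_eq_zero.mp this.symm).resolve_right hu0
    set g := linearizedMap F (fun i => if i = 0 then -α else 1) 1
    have hg : ∀ x, g x = x ^ q - α * x := fun x => by
      simp only [g, linearizedMap_apply, sum_range_succ, range_one, sum_singleton, pow_zero,
        pow_one, if_pos, one_ne_zero, if_false]
      ring
    have hkerg : finrank F (LinearMap.ker g) ≤ 1 :=
      finrank_ker_linearizedMap_le ⟨1, le_rfl, by simp⟩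
    have hmaps : ∀ x ∈ LinearMap.ker (linearizedMap F b (k + 1)),
        g x ∈ LinearMap.ker (linearizedMap F h k) := fun x hx => by
      rw [LinearMap.mem_ker] at hx ⊢
      rw [hdecomp x, hb0, zero_mul, add_zero, ← hg] at hx
      exact hx
    have hkerH := finrank_le_finrank_add_finrank_ker_of_mapsTo g hmaps
    have hIH := ih (b := h) (by omega)
    have hnormα : Algebra.norm F α = 1 := by
      rw [map_pow]
      exact FiniteField.pow_card_sub_one_eq_one _ (Algebra.norm_ne_zero_iff.mpr hu0)
    calc Algebra.norm F (b 0) = Algebra.norm F (-1 * h 0 * α) := by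
          rw [eq_neg_of_add_eq_zero_left hb0, neg_one_mul, neg_mul]
      _ = Algebra.norm F ((-1) ^ (k + 1) * b (k + 1)) := by
          rw [map_mul, map_mul, hnormα, hIH, htop, pow_succ, map_mul, map_mul, map_mul]
          ring

end Linearized

section TwistedCoeff

variable {L : Type*} [Monoid L] (q : ℕ) (η : L) (r : ℕ) {k : ℕ} (hk : 0 < k) (c : Fin k → L)

-- Only the entries `i ≤ k` matter: `linearizedMap _ b k` never reads `b i` for `i > k`.
def twistedCoeff : ℕ → L :=
  fun i => if h : i < k then c ⟨i, h⟩ else η * c ⟨0, hk⟩ ^ q ^ r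

theorem twistedCoeff_of_lt (i : Fin k) : twistedCoeff q η r hk c i = c i :=
  dif_pos i.isLt

theorem twistedCoeff_zero : twistedCoeff q η r hk c 0 = c ⟨0, hk⟩ :=
  dif_pos hk

theorem twistedCoeff_self : twistedCoeff q η r hk c k = η * c ⟨0, hk⟩ ^ q ^ r :=
  dif_neg (lt_irrefl k)

end TwistedCoeff

section Twisted

variable {F L : Type*} [Field F] [Fintype F] [Field L] [Algebra F L] {η : L} (r : ℕ) {k : ℕ}
  (hk : 0 < k)

theorem linearizedMap_twistedCoeff_apply (c : Fin k → L) (x : L) :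
    linearizedMap F (twistedCoeff (Fintype.card F) η r hk c) k x =
      ∑ i : Fin k, c i * x ^ Fintype.card F ^ (i : ℕ)
        + η * c ⟨0, hk⟩ ^ Fintype.card F ^ r * x ^ Fintype.card F ^ k := by
  rw [linearizedMap_apply, sum_range_succ, ← Fin.sum_univ_eq_sum_range, twistedCoeff_self]
  simp only [twistedCoeff_of_lt]

theorem twistedCoeff_sub (c c' : Fin k → L) :
    twistedCoeff (Fintype.card F) η r hk (c - c') =
      twistedCoeff (Fintype.card F) η r hk c - twistedCoeff (Fintype.card F) η r hk c' := by
  ext i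
  by_cases hi : i < k
  · simp [twistedCoeff, hi]
  · simp [twistedCoeff, hi, sub_pow_card_pow, mul_sub]

theorem finrank_ker_linearizedMap_twistedCoeff_lt [Finite L]
    (hη : Algebra.norm F η ≠ (-1) ^ (finrank F L * k)) {c : Fin k → L} (hc : c ≠ 0) :
    finrank F (LinearMap.ker (linearizedMap F (twistedCoeff (Fintype.card F) η r hk c) k)) <
      k := by
  obtain ⟨k, rfl⟩ : ∃ k', k = k' + 1 := ⟨k - 1, by omega⟩
  by_cases htop : twistedCoeff (Fintype.card F) η r hk c (k + 1) = 0
  · rw [linearizedMap_succ_of_eq_zero htop]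
    obtain ⟨i, hi⟩ := Function.ne_iff.mp hc
    exact Nat.lt_succ_of_le (finrank_ker_linearizedMap_le
      ⟨i, Nat.lt_succ_iff.mp i.isLt, by rwa [twistedCoeff_of_lt]⟩)
  by_contra! hker
  have hc₀ : Algebra.norm F (c ⟨0, hk⟩) ≠ 0 := Algebra.norm_ne_zero_iff.mpr fun h0 => htop (by
    rw [twistedCoeff_self, h0, zero_pow (pow_ne_zero _ Fintype.card_ne_zero), mul_zero])
  have hnorm_neg_one : Algebra.norm F (-1 : L) = (-1) ^ finrank F L := by
    rw [← map_one (algebraMap F L), ← map_neg, Algebra.norm_algebraMap]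
  have hGQ := norm_coeff_zero_eq_of_le_finrank_ker hker
  rw [twistedCoeff_zero, twistedCoeff_self] at hGQ
  simp only [map_mul, map_pow, FiniteField.pow_card_pow, hnorm_neg_one, ← pow_mul] at hGQ
  have hsq : (-1 : F) ^ (finrank F L * (k + 1)) * (-1) ^ (finrank F L * (k + 1)) = 1 := by
    rw [← pow_add, Even.neg_one_pow ⟨_, rfl⟩]
  have hprod : (-1) ^ (finrank F L * (k + 1)) * Algebra.norm F η = 1 :=
    mul_right_cancel₀ hc₀ (by linear_combination -hGQ)
  exact hη <| by
    linear_combination (-1 : F) ^ (finrank F L * (k + 1)) * hprod - Algebra.norm F η * hsq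

theorem linearizedMap_twistedCoeff_injective [Finite L]
    (hη : Algebra.norm F η ≠ (-1) ^ (finrank F L * k)) (hkn : k ≤ finrank F L) :
    Function.Injective fun c : Fin k → L =>
      linearizedMap F (twistedCoeff (Fintype.card F) η r hk c) k := by
  intro c c' hcc
  by_contra hne
  have hlt := finrank_ker_linearizedMap_twistedCoeff_lt r hk hη (sub_ne_zero.mpr hne)
  rw [twistedCoeff_sub, linearizedMap_sub, sub_eq_zero.mpr hcc, LinearMap.ker_zero,
    finrank_top] at hlt
  omega

end Twisted

theorem stmt_9_general (q n : ℕ)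
    (F L : Type) [Field F] [Fintype F] [Field L] [Fintype L] [Algebra F L]
    (hF : Fintype.card F = q) (hL : Fintype.card L = q ^ n)
    (k r : ℕ) (hk : 0 < k) (hkn : k < n) (η : L)
    (hη : η ^ ((q ^ n - 1) / (q - 1)) ≠ (-1) ^ (n * k)) :
    (∀ c : Fin k → L, c ≠ 0 →
      n - k + 1 ≤ Module.finrank F (Submodule.span F (Set.range
        (fun a : L => (∑ i : Fin k, c i * a ^ q ^ (i : ℕ))
          + η * (c ⟨0, hk⟩) ^ q ^ r * a ^ q ^ k)))) ∧
    Nat.card {g : L → L // ∃ c : Fin k → L,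
      g = fun a : L => (∑ i : Fin k, c i * a ^ q ^ (i : ℕ))
        + η * (c ⟨0, hk⟩) ^ q ^ r * a ^ q ^ k} = q ^ (n * k) := by
  subst hF
  have hfinrank : finrank F L = n :=
    Nat.pow_right_injective (Fintype.one_lt_card (α := F))
      (hL ▸ card_eq_pow_finrank (K := F)).symm
  have hcardL : Nat.card L = Nat.card F ^ n := by simp only [Nat.card_eq_fintype_card, hL]
  have hηN : Algebra.norm F η ≠ (-1) ^ (finrank F L * k) := fun h => hη <| by
    rw [← Nat.card_eq_fintype_card (α := F), ← hcardL, ← FiniteField.algebraMap_norm_eq_pow, h,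
      hfinrank, map_pow, map_neg, map_one]
  set Φ := fun c : Fin k → L => linearizedMap F (twistedCoeff (Fintype.card F) η r hk c) k
  have hΦ : ∀ c : Fin k → L, (fun a : L => (∑ i : Fin k, c i * a ^ Fintype.card F ^ (i : ℕ))
      + η * (c ⟨0, hk⟩) ^ Fintype.card F ^ r * a ^ Fintype.card F ^ k) = Φ c :=
    fun c => funext fun a => (linearizedMap_twistedCoeff_apply r hk c a).symm
  refine ⟨fun c hc => ?_, ?_⟩
  · rw [hΦ c, ← LinearMap.coe_range, Submodule.span_eq]
    have hrank := LinearMap.finrank_range_add_finrank_ker (Φ c)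
    have hker : finrank F (LinearMap.ker (Φ c)) < k :=
      finrank_ker_linearizedMap_twistedCoeff_lt r hk hηN hc
    omega
  · have hinj := DFunLike.coe_injective.comp
      (linearizedMap_twistedCoeff_injective r hk hηN (by omega))
    have hrange : {g : L → L | ∃ c, g = Φ c} = Set.range (DFunLike.coe ∘ Φ) :=
      Set.ext fun g => exists_congr fun c => eq_comm
    simp only [hΦ]
    rw [← Set.coe_ofPred, hrange, Nat.card_range_of_injective hinj, Nat.card_fun, hcardL,
      Nat.card_eq_fintype_card, Nat.card_fin, ← pow_mul]

/-- Under N(η) ≠ (-1)^{nk}, every nonzero element of G(η,r), viewed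
as an F_q-linear endomorphism of F_{q^n}, has rank at least n-k+1; hence the
twisted Gabidulin code G(η,r) is MRD of size q^{nk}. -/
theorem stmt_9 (q n : ℕ) (hq : IsPrimePow q) (hn : 0 < n)
    (F L : Type) [Field F] [Fintype F] [Field L] [Fintype L] [Algebra F L]
    (hF : Fintype.card F = q) (hL : Fintype.card L = q ^ n)
    (k r : ℕ) (hk : 0 < k) (hkn : k < n) (η : L)
    (hη : η ^ ((q ^ n - 1) / (q - 1)) ≠ (-1) ^ (n * k)) :
    (∀ c : Fin k → L, c ≠ 0 →
      n - k + 1 ≤ Module.finrank F (Submodule.span F (Set.range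
        (fun a : L => (∑ i : Fin k, c i * a ^ q ^ (i : ℕ))
          + η * (c ⟨0, hk⟩) ^ q ^ r * a ^ q ^ k)))) ∧
    Nat.card {g : L → L // ∃ c : Fin k → L,
      g = fun a : L => (∑ i : Fin k, c i * a ^ q ^ (i : ℕ))
        + η * (c ⟨0, hk⟩) ^ q ^ r * a ^ q ^ k} = q ^ (n * k) :=
  stmt_9_general q n F L hF hL k r hk hkn η hη
end

section
/- The twisted Gabidulin set G(η,r) is an F_q-linear subspace of the space of F_q-linear endomorphisms of F_{q^n}, of F_q-dimension nk, but for r ≢ 0 mod n and η ≠ 0 it is not closed under multiplication by all scalars of F_{q^n} (acting by post-composition with multiplication maps), whenever q^r-th power is not the identity on F_{q^n}. -/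
open Polynomial in
lemma aux_coeffs (q k : ℕ) (hq1 : 1 < q)
    (L : Type) [Field L] [Fintype L] (hcard : q ^ k < Fintype.card L)
    (c : Fin k → L) (t : L)
    (h : ∀ a : L, (∑ i : Fin k, c i * a ^ q ^ (i : ℕ)) + t * a ^ q ^ k = 0) :
    (∀ i, c i = 0) ∧ t = 0 := by
  classical
  set P : L[X] := (∑ i : Fin k, C (c i) * X ^ q ^ (i : ℕ)) + C t * X ^ q ^ k with hP
  have hinj : Function.Injective (fun m : ℕ => q ^ m) := Nat.pow_right_injective hq1
  have heval : ∀ a : L, P.eval a = (∑ i : Fin k, c i * a ^ q ^ (i : ℕ)) + t * a ^ q ^ k := by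
    intro a
    simp [hP, eval_finset_sum]
  have hdeg : P.natDegree < Fintype.card L := by
    refine lt_of_le_of_lt ?_ hcard
    refine le_trans (natDegree_add_le _ _) ?_
    refine max_le ?_ (natDegree_C_mul_le _ _ |>.trans (by simp))
    refine natDegree_sum_le_of_forall_le _ _ ?_
    intro i _
    refine le_trans (natDegree_C_mul_le _ _) ?_
    simp only [natDegree_X_pow, natDegree_C, zero_add]
    exact Nat.pow_le_pow_right (le_of_lt hq1) i.2.le
  have hP0 : P = 0 :=
    eq_zero_of_natDegree_lt_card_of_eval_eq_zero P Function.injective_id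
      (fun a => by rw [heval]; exact h a) hdeg
  constructor
  · intro j
    have : P.coeff (q ^ (j : ℕ)) = c j := by
      simp only [hP, coeff_add, finset_sum_coeff, coeff_C_mul, coeff_X_pow]
      rw [Finset.sum_eq_single j]
      · have hjk : ¬ (q ^ (j : ℕ) = q ^ k) := fun hh => absurd (hinj hh) j.2.ne
        simp [hjk]
      · intro b _ hb
        have : ¬ (q ^ (j : ℕ) = q ^ (b : ℕ)) := fun hh => hb (Fin.ext (hinj hh)).symm
        simp [this]
      · simp
    rw [← this, hP0, coeff_zero]
  · have : P.coeff (q ^ k) = t := by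
      simp only [hP, coeff_add, finset_sum_coeff, coeff_C_mul, coeff_X_pow]
      rw [Finset.sum_eq_zero]
      · simp
      · intro b _
        have : ¬ (q ^ k = q ^ (b : ℕ)) := fun hh => absurd (hinj hh).symm b.2.ne
        simp [this]
    rw [← this, hP0, coeff_zero]

/-- G(η,r) is an F_q-subspace of the F_q-linear endomorphisms of
F_{q^n} of dimension nk, but (for η ≠ 0, when the q^r-th power map is not the
identity on F_{q^n}) it is not closed under scalar multiplication by all
elements of F_{q^n} acting by post-composition with multiplication maps. -/
theorem stmt_10 (q n : ℕ) (hq : IsPrimePow q) (hn : 0 < n)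
    (F L : Type) [Field F] [Fintype F] [Field L] [Fintype L] [Algebra F L]
    (hF : Fintype.card F = q) (hL : Fintype.card L = q ^ n)
    (k r : ℕ) (hk : 0 < k) (hkn : k < n) (η : L) (hη : η ≠ 0) :
    ∃ S : Submodule F (L → L),
      (S : Set (L → L)) = {g : L → L | ∃ c : Fin k → L,
        g = fun a : L => (∑ i : Fin k, c i * a ^ q ^ (i : ℕ))
          + η * (c ⟨0, hk⟩) ^ q ^ r * a ^ q ^ k} ∧
      Module.finrank F S = n * k ∧
      ((∃ x : L, x ^ q ^ r ≠ x) →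
        ∃ d : L, ∃ g ∈ S, (fun a : L => d * g a) ∉ S) := by
  classical
  have hq1 : 1 < q := hq.one_lt
  obtain ⟨p, e, hp, he, hpe⟩ := hq
  have hpprime : p.Prime := hp.nat_prime
  -- characteristic of L is p
  have hcharL : CharP L p := by
    have h1 : ringChar L ∣ q ^ n := by
      rw [← hL]
      exact ringChar.dvd (by simp [Nat.cast_card_eq_zero])
    have h2 : (ringChar L).Prime := CharP.char_is_prime L (ringChar L)
    have h3 : ringChar L ∣ p := by
      rw [← hpe, ← pow_mul] at h1
      exact h2.dvd_of_dvd_pow h1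
    have : ringChar L = p := ((Nat.prime_dvd_prime_iff_eq h2 hpprime).mp h3)
    rw [← this]
    exact ringChar.charP L
  haveI : Fact p.Prime := ⟨hpprime⟩
  -- additivity of q^m-th power
  have hadd : ∀ (m : ℕ) (x y : L), (x + y) ^ q ^ m = x ^ q ^ m + y ^ q ^ m := by
    intro m x y
    have := map_add (iterateFrobenius L p (e * m)) x y
    rw [show q ^ m = p ^ (e * m) by rw [← hpe, pow_mul]]
    simpa [iterateFrobenius_def] using this
  -- F-scalars are fixed by q^r-th power
  have hfix : ∀ s : F, (algebraMap F L s) ^ q ^ r = algebraMap F L s := by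
    intro s
    rw [← map_pow]
    congr 1
    rw [← hF]
    exact FiniteField.pow_card_pow r s
  -- the q^k < card L bound
  have hcard : q ^ k < Fintype.card L := by
    rw [hL]; exact Nat.pow_lt_pow_right hq1 hkn
  -- the linear map
  set φ : (Fin k → L) →ₗ[F] (L → L) :=
    { toFun := fun c => fun a : L => (∑ i : Fin k, c i * a ^ q ^ (i : ℕ))
        + η * (c ⟨0, hk⟩) ^ q ^ r * a ^ q ^ k
      map_add' := by
        intro c c'
        funext a
        simp only [Pi.add_apply, hadd r, add_mul, mul_add, Finset.sum_add_distrib]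
        ring
      map_smul' := by
        intro s c
        funext a
        simp only [Pi.smul_apply, smul_eq_mul, Algebra.smul_def, RingHom.id_apply, Pi.add_apply]
        rw [mul_pow, hfix s, mul_add, Finset.mul_sum]
        congr 1
        · exact Finset.sum_congr rfl fun i _ => by ring
        · ring } with hφ
  have hφ_apply : ∀ (c : Fin k → L) (a : L), φ c a = (∑ i : Fin k, c i * a ^ q ^ (i : ℕ))
      + η * (c ⟨0, hk⟩) ^ q ^ r * a ^ q ^ k := fun c a => rfl
  have hφinj : Function.Injective φ := by
    rw [← LinearMap.ker_eq_bot]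
    ext c
    simp only [LinearMap.mem_ker, Submodule.mem_bot]
    constructor
    · intro h0
      have := aux_coeffs q k hq1 L hcard c (η * (c ⟨0, hk⟩) ^ q ^ r)
        (fun a => by rw [← hφ_apply]; rw [h0]; rfl)
      funext i; exact this.1 i
    · rintro rfl
      funext a
      have hqr0 : q ^ r ≠ 0 := pow_ne_zero _ (by omega)
      simp [hφ_apply, zero_pow hqr0]
  refine ⟨LinearMap.range φ, ?_, ?_, ?_⟩
  · ext g
    simp only [LinearMap.mem_range, SetLike.mem_coe, Set.mem_setOf_eq]
    constructor
    · rintro ⟨c, rfl⟩; exact ⟨c, rfl⟩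
    · rintro ⟨c, rfl⟩; exact ⟨c, rfl⟩
  · -- dimension
    haveI : Module.Finite F L := Module.Finite.of_finite
    have h1 : Module.finrank F (LinearMap.range φ) = Module.finrank F (Fin k → L) :=
      (LinearEquiv.finrank_eq (LinearEquiv.ofInjective φ hφinj)).symm
    have h2 : Module.finrank F (Fin k → L) = k * Module.finrank F L := by
      rw [Module.finrank_pi_fintype]
      simp [Finset.sum_const, Fintype.card_fin]
    have h3 : Module.finrank F L = n := by
      have := Module.card_eq_pow_finrank (K := F) (V := L)
      rw [hL, hF] at this
      exact (Nat.pow_right_injective hq1 this.symm)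
    rw [h1, h2, h3, Nat.mul_comm]
  · rintro ⟨x, hx⟩
    set c₁ : Fin k → L := fun i => if i = ⟨0, hk⟩ then 1 else 0 with hc₁
    have hsum : ∀ (v a : L), (∑ i : Fin k, (if i = ⟨0, hk⟩ then v else 0) * a ^ q ^ (i : ℕ))
        = v * a := by
      intro v a
      rw [Finset.sum_eq_single (⟨0, hk⟩ : Fin k)]
      · simp
      · intro b _ hb; simp [hb]
      · simp
    refine ⟨x, φ c₁, LinearMap.mem_range_self φ c₁, ?_⟩
    intro hmem
    obtain ⟨c, hc⟩ := hmem
    have hgc : ∀ a : L, x * φ c₁ a = (∑ i : Fin k, c i * a ^ q ^ (i : ℕ))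
        + η * (c ⟨0, hk⟩) ^ q ^ r * a ^ q ^ k := by
      intro a
      rw [← hφ_apply]
      exact (congrFun hc a).symm ▸ rfl
    have hg1 : ∀ a : L, x * φ c₁ a = x * a + x * η * a ^ q ^ k := by
      intro a
      rw [hφ_apply]
      simp [hc₁, hsum 1 a, mul_add, mul_assoc]
    have key := aux_coeffs q k hq1 L hcard
      (fun i => (if i = ⟨0, hk⟩ then x else 0) - c i)
      (x * η - η * (c ⟨0, hk⟩) ^ q ^ r) ?_
    · have h0 : x = c ⟨0, hk⟩ := by
        have := key.1 ⟨0, hk⟩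
        simpa using sub_eq_zero.mp (by simpa using this)
      have ht : x * η = η * (c ⟨0, hk⟩) ^ q ^ r := sub_eq_zero.mp key.2
      rw [← h0] at ht
      apply hx
      have : η * x ^ q ^ r = η * x := by rw [← ht]; ring
      exact mul_left_cancel₀ hη this
    · intro a
      have expand : (∑ i : Fin k, ((if i = ⟨0, hk⟩ then x else 0) - c i) * a ^ q ^ (i : ℕ))
          = (∑ i : Fin k, (if i = ⟨0, hk⟩ then x else 0) * a ^ q ^ (i : ℕ))
            - (∑ i : Fin k, c i * a ^ q ^ (i : ℕ)) := by
        rw [← Finset.sum_sub_distrib]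
        congr 1; funext i; ring
      rw [expand, hsum x a]
      have := hgc a
      rw [hg1 a] at this
      linear_combination this
end

section
/- If N(η) ≠ (-1)^{nk} and f, g ∈ G(η,r) satisfy f(α_i) = g(α_i) for all elements α_1, ..., α_n of an F_q-basis of F_{q^n}, then f = g (as polynomials, i.e., coefficientwise). -/
/-!
Since `x ↦ x ^ q ^ i` is `F_q`-linear on `F_{q^n}`, the difference `f - g` of two members of
`G(η,r)` is an `F_q`-linear map given by a `q`-polynomial of `q`-degree at most `k < n`.
It vanishes on a basis, hence on all of `F_{q^n}`; a polynomial of degree `q ^ k < q ^ n`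
vanishing on `F_{q^n}` is zero, so all coefficients of `f - g` vanish.
-/

open Polynomial

theorem eq_zero_of_forall_sum_mul_pow_eq_zero {K ι : Type*} [Field K] [Fintype K] [Fintype ι]
    {e : ι → ℕ} (he : Function.Injective e) (he_lt : ∀ i, e i < Fintype.card K) {a : ι → K}
    (h : ∀ x, ∑ i, a i * x ^ e i = 0) : a = 0 := by
  classical
  set P : K[X] := ∑ i, monomial (e i) (a i)
  have hdeg : P.natDegree ≤ Fintype.card K - 1 :=
    natDegree_sum_le_of_forall_le _ _ fun i _ =>
      (natDegree_monomial_le _).trans (Nat.le_sub_one_of_lt (he_lt i))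
  have hP : P = 0 := P.eq_zero_of_natDegree_lt_card_of_eval_eq_zero Function.injective_id
    (fun x => by simpa [P, eval_finsetSum] using h x)
    (by simpa using hdeg.trans_lt (Nat.sub_one_lt Fintype.card_ne_zero))
  funext i
  simpa [P, finsetSum_coeff, coeff_monomial, he.eq_iff] using congr_arg (coeff · (e i)) hP

namespace FiniteField

variable (F : Type*) {L : Type*} [Field F] [Fintype F] [Field L] [Algebra F L]

def linearizedMap {m : ℕ} (a : Fin m → L) : L →ₗ[F] L :=
  ∑ i, a i • (frobeniusAlgHom F L ^ (i : ℕ)).toLinearMap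

theorem linearizedMap_apply {m : ℕ} (a : Fin m → L) (x : L) :
    linearizedMap F a x = ∑ i, a i * x ^ Fintype.card F ^ (i : ℕ) := by
  simp [linearizedMap, AlgHom.coe_pow, coe_frobeniusAlgHom, pow_iterate]

variable {F}

theorem eq_zero_of_forall_basis_sum_mul_pow_card_pow_eq_zero [Fintype L] {ι : Type*}
    (B : Module.Basis ι F L) {m : ℕ} (hm : m ≤ Module.finrank F L) {a : Fin m → L}
    (h : ∀ j, ∑ i, a i * B j ^ Fintype.card F ^ (i : ℕ) = 0) : a = 0 := by
  have hmap : linearizedMap F a = 0 := B.ext fun j => by simpa [linearizedMap_apply] using h j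
  have hq : 1 < Fintype.card F := Fintype.one_lt_card
  refine eq_zero_of_forall_sum_mul_pow_eq_zero
    ((Nat.pow_right_injective hq).comp Fin.val_injective) (fun i => ?_)
    fun x => by simpa [linearizedMap_apply] using LinearMap.congr_fun hmap x
  rw [Module.card_eq_pow_finrank (K := F) (V := L)]
  exact Nat.pow_lt_pow_right hq (i.2.trans_le hm)

end FiniteField

theorem stmt_11_general (q n : ℕ)
    (F L : Type) [Field F] [Fintype F] [Field L] [Fintype L] [Algebra F L]
    (hF : Fintype.card F = q)
    (k r : ℕ) (hk : 0 < k) (hkn : k < n) (η : L)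
    (B : Module.Basis (Fin n) F L) (c c' : Fin k → L)
    (hagree : ∀ j : Fin n,
      (∑ i : Fin k, c i * (B j) ^ q ^ (i : ℕ)) + η * (c ⟨0, hk⟩) ^ q ^ r * (B j) ^ q ^ k
      = (∑ i : Fin k, c' i * (B j) ^ q ^ (i : ℕ))
          + η * (c' ⟨0, hk⟩) ^ q ^ r * (B j) ^ q ^ k) :
    c = c' := by
  subst hF
  let a : Fin (k + 1) → L :=
    Fin.snoc (fun i => c i - c' i) (η * c ⟨0, hk⟩ ^ Fintype.card F ^ r
      - η * c' ⟨0, hk⟩ ^ Fintype.card F ^ r)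
  have ha : a = 0 := by
    refine FiniteField.eq_zero_of_forall_basis_sum_mul_pow_card_pow_eq_zero B
      (by rw [Module.finrank_eq_card_basis B, Fintype.card_fin]; omega) fun j => ?_
    simp only [a, Fin.sum_univ_castSucc, Fin.snoc_castSucc, Fin.snoc_last, Fin.val_castSucc,
      Fin.val_last, sub_mul, Finset.sum_sub_distrib]
    linear_combination hagree j
  funext i
  simpa [a, sub_eq_zero] using congr_fun ha i.castSucc

/-- If N(η) ≠ (-1)^{nk} and f, g ∈ G(η,r) agree on all elements of
an F_q-basis of F_{q^n}, then f = g coefficientwise. -/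
theorem stmt_11 (q n : ℕ) (hq : IsPrimePow q) (hn : 0 < n)
    (F L : Type) [Field F] [Fintype F] [Field L] [Fintype L] [Algebra F L]
    (hF : Fintype.card F = q) (hL : Fintype.card L = q ^ n)
    (k r : ℕ) (hk : 0 < k) (hkn : k < n) (η : L)
    (hη : η ^ ((q ^ n - 1) / (q - 1)) ≠ (-1) ^ (n * k))
    (B : Module.Basis (Fin n) F L) (c c' : Fin k → L)
    (hagree : ∀ j : Fin n,
      (∑ i : Fin k, c i * (B j) ^ q ^ (i : ℕ)) + η * (c ⟨0, hk⟩) ^ q ^ r * (B j) ^ q ^ k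
      = (∑ i : Fin k, c' i * (B j) ^ q ^ (i : ℕ))
          + η * (c' ⟨0, hk⟩) ^ q ^ r * (B j) ^ q ^ k) :
    c = c' :=
  stmt_11_general q n F L hF k r hk hkn η B c c' hagree
end
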